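/- arXiv:1512.06143 — 2 statements merged into one kernel-verified Lean document; each statement's English description precedes it below -/
import Mathlib

section
/- Let S₁,…,S_k be subsets of [n] constructed as follows: for a string x ∈ {0,1}ⁿ with n = C(k, k/2) and a bijection σ from the family F of all k/2-element subsets of [k] to [n], start with each Sᵢ = [n] and, for each j ∈ [n] with x_j = 0, remove j from Sᵢ for every i ∈ σ⁻¹(j) (the unique (k/2)-subset Q with σ(Q) = j). Then for any Q = {i₁,…,i_{k/2}} ∈ F, the union S_{i₁} ∪ ⋯ ∪ S_{i_{k/2}} equals [n] if and only if x_{σ(Q)} = 1. -/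
/-! A set `Sᵢ` misses exactly the positions `j` with `x_j = 0` whose preimage contains `i`,
so a point `j` escapes `⋃_{i ∈ Q} Sᵢ` iff `x_j = 0` and `Q ⊆ σ⁻¹(j)`. All preimages have the
same size `k/2`, so `Q ⊆ σ⁻¹(j)` forces `σ⁻¹(j) = Q`, i.e. `j = σ(Q)`. -/

section Embedding

variable {α ι : Type*} {x : α → Bool} {A : α → Finset ι} {S : ι → Set α}

theorem mem_biUnion_iff_of_nonempty (hS : ∀ i j, j ∈ S i ↔ ¬(x j = false ∧ i ∈ A j))
    {Q : Finset ι} (hQ : Q.Nonempty) (j : α) :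
    j ∈ ⋃ i ∈ Q, S i ↔ x j = true ∨ ¬Q ⊆ A j := by
  simp only [Set.mem_iUnion, hS, not_and, Finset.not_subset]
  cases x j
  · simp
  · simpa using hQ.exists_mem

theorem biUnion_eq_univ_iff_of_nonempty (hS : ∀ i j, j ∈ S i ↔ ¬(x j = false ∧ i ∈ A j))
    {Q : Finset ι} (hQ : Q.Nonempty) :
    ⋃ i ∈ Q, S i = Set.univ ↔ ∀ j, x j = false → ¬Q ⊆ A j := by
  simp only [Set.eq_univ_iff_forall, mem_biUnion_iff_of_nonempty hS hQ, ← Bool.not_eq_true,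
    or_iff_not_imp_left]

end Embedding

theorem Equiv.subset_symm_apply_iff {ι α : Type*} {m : ℕ}
    (e : {Q : Finset ι // Q.card = m} ≃ α) (Q : {Q : Finset ι // Q.card = m}) (j : α) :
    Q.1 ⊆ (e.symm j).1 ↔ e Q = j := by
  refine ⟨fun h => ?_, fun h => h ▸ by simp⟩
  have hQ : Q = e.symm j :=
    Subtype.ext <| Finset.eq_of_subset_of_card_le h (by rw [Q.2, (e.symm j).2])
  simp [hQ]

/-- In the hard-distribution embedding for the Coverage problem: with `n = C(k, k/2)`,
a bijection `e` from the `(k/2)`-subsets of `[k]` to `[n]`, and sets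
`Sᵢ = [n] \ {j : x_j = 0 and i ∈ e⁻¹(j)}`, for every `(k/2)`-subset `Q` the union
`⋃_{i ∈ Q} Sᵢ` equals `[n]` iff `x_{e(Q)} = 1`. -/
theorem coverage_union_eq_univ_iff {k : ℕ} (hk : 0 < k) (hke : Even k)
    (e : {Q : Finset (Fin k) // Q.card = k / 2} ≃ Fin (k.choose (k / 2)))
    (x : Fin (k.choose (k / 2)) → Bool)
    (S : Fin k → Set (Fin (k.choose (k / 2))))
    (hS : ∀ i j, j ∈ S i ↔ ¬(x j = false ∧ i ∈ (e.symm j).1)) :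
    ∀ Q : {Q : Finset (Fin k) // Q.card = k / 2},
      (⋃ i ∈ Q.1, S i) = Set.univ ↔ x (e Q) = true := by
  intro Q
  have hQ : Q.1.Nonempty := by
    obtain ⟨m, rfl⟩ := hke
    exact Finset.card_pos.mp (by rw [Q.2]; omega)
  rw [biUnion_eq_univ_iff_of_nonempty hS hQ]
  simp only [e.subset_symm_apply_iff]
  constructor
  · intro h
    by_contra hx
    exact h _ (by simpa using hx) rfl
  · rintro hx j hj rfl
    simp_all
end

section
/- In the construction of the previous claim, for any Q ∈ F with Q = {i₁,…,i_{k/2}}, the union S_{i₁} ∪ ⋯ ∪ S_{i_{k/2}} is either [n] or [n] \ {j} for a single element j = σ(Q). -/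
/-!
A point `j` missed by every `Sᵢ` with `i ∈ Q` has `Q ⊆ σ⁻¹(j)`; both sets have `k/2` elements,
so `σ⁻¹(j) = Q`. Hence the union misses at most the single point `σ(Q)`.
-/

theorem Set.eq_univ_or_eq_univ_diff_singleton_of_compl_subset {α : Type*} {s : Set α} {a : α}
    (h : sᶜ ⊆ {a}) : s = univ ∨ s = univ \ {a} := by
  rw [← compl_eq_univ_sdiff, ← compl_empty_iff, ← compl_inj_iff (x := s)]
  simpa only [compl_compl] using subset_singleton_iff_eq.1 h

theorem coverage_union_eq_univ_or_erase_general {k : ℕ}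
    (e : {Q : Finset (Fin k) // Q.card = k / 2} ≃ Fin (k.choose (k / 2)))
    (x : Fin (k.choose (k / 2)) → Bool)
    (S : Fin k → Set (Fin (k.choose (k / 2))))
    (hS : ∀ i j, j ∈ S i ↔ ¬(x j = false ∧ i ∈ (e.symm j).1)) :
    ∀ Q : {Q : Finset (Fin k) // Q.card = k / 2},
      (⋃ i ∈ Q.1, S i) = Set.univ ∨ (⋃ i ∈ Q.1, S i) = Set.univ \ {e Q} := by
  intro Q
  refine Set.eq_univ_or_eq_univ_diff_singleton_of_compl_subset fun j hj => ?_
  have hQ_sub : Q.1 ⊆ (e.symm j).1 := fun i hi =>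
    (not_not.1 <| mt (hS i j).2 fun hjS => hj (Set.mem_iUnion₂.2 ⟨i, hi, hjS⟩)).2
  have hQ_eq : e.symm j = Q :=
    (Subtype.ext <| Finset.eq_of_subset_of_card_le hQ_sub (by rw [Q.2, (e.symm j).2])).symm
  exact e.symm_apply_eq.1 hQ_eq

/-- In the hard-distribution embedding for the Coverage problem, for every `(k/2)`-subset
`Q` of `[k]`, the union `⋃_{i ∈ Q} Sᵢ` is either all of `[n]` or `[n] \ {e(Q)}`. -/
theorem coverage_union_eq_univ_or_erase {k : ℕ} (hk : 0 < k) (hke : Even k)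
    (e : {Q : Finset (Fin k) // Q.card = k / 2} ≃ Fin (k.choose (k / 2)))
    (x : Fin (k.choose (k / 2)) → Bool)
    (S : Fin k → Set (Fin (k.choose (k / 2))))
    (hS : ∀ i j, j ∈ S i ↔ ¬(x j = false ∧ i ∈ (e.symm j).1)) :
    ∀ Q : {Q : Finset (Fin k) // Q.card = k / 2},
      (⋃ i ∈ Q.1, S i) = Set.univ ∨ (⋃ i ∈ Q.1, S i) = Set.univ \ {e Q} :=
  coverage_union_eq_univ_or_erase_general e x S hS
end
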